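/- arXiv:1510.04638 — 2 statements merged into one kernel-verified Lean document; each statement's English description precedes it below -/
import Mathlib

section
/- Let w: R^d → R_+ be a radial non-negative function supported on the annulus {1/4 < |u| ≤ 1/2}, and for U > 1 set w_U(u) = U^{-d} w(u/U). For any positive semi-definite matrix A ∈ R^{d×d}, the weighted norm ||A||_w² := ∫_{R^d} ⟨Θ(u), A⟩² w_U(u) du, where Θ(u) = uu^T/|u|², satisfies κ₁ ||A||_2² ≤ ||A||_w² ≤ 2||w||_{L¹} ||A||_2², where κ₁ = ∫ (v_1⁴/|v|⁴) w(v) dv and ||A||_2 is the Frobenius norm. In particular, the constants do not depend on U. -/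
/-!
Diagonalise `A = Q diag(λ) Qᵀ` with `λ ≥ 0`. The integrand `⟨Θ(u), A⟩²` is homogeneous of degree
zero, so the substitution `u ↦ U u` removes `U`; the rotation `u ↦ Qᵀ u` preserves Lebesgue measure
and the radial weight, so the weighted norm becomes `∫ (∑ λₖ pₖ(u))² w(u) du` with `pₖ = uₖ²/|u|²`,
a probability vector for `u ≠ 0`. Pointwise `∑ λₖ² pₖ² ≤ (∑ λₖ pₖ)² ≤ ∑ λₖ²`, by nonnegativity and
Cauchy–Schwarz. All coordinates of a radial weight have the same fourth moment, so the left side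
integrates to `κ₁ ∑ λₖ²`, and `∑ λₖ² = ‖A‖₂²`.

The bounds are proved for lower Lebesgue integrals first. Since `∑ₖ pₖ² ≥ 1/d`, the integrals
`κ₁` and `‖w‖_{L¹}` are infinite together, and then both real bounds collapse to the junk value `0`
of a non-integrable Bochner integral.
-/

open Matrix MeasureTheory BigOperators
open scoped ENNReal

namespace Matrix

variable {n : Type*} [Fintype n]

theorem trace_transpose_of_mul_div_mul (x : n → ℝ) (c : ℝ) (A : Matrix n n ℝ) :
    trace ((of fun i j => x i * x j / c)ᵀ * A) = x ⬝ᵥ A *ᵥ x / c := by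
  simp only [trace, diag, mul_apply, transpose_apply, of_apply, dotProduct, mulVec,
    Finset.sum_div, Finset.mul_sum]
  rw [Finset.sum_comm]
  refine Finset.sum_congr rfl fun i _ => Finset.sum_congr rfl fun j _ => ?_
  ring

variable [DecidableEq n] {A : Matrix n n ℝ}

theorem IsHermitian.dotProduct_mulVec_eq_sum_eigenvalues (hA : A.IsHermitian)
    (v : EuclideanSpace ℝ n) :
    v ⬝ᵥ A *ᵥ v = ∑ k, hA.eigenvalues k * hA.eigenvectorBasis.repr v k ^ 2 := by
  have hsymm : ∀ x y : n → ℝ, x ⬝ᵥ A *ᵥ y = y ⬝ᵥ A *ᵥ x := fun x y => by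
    rw [dotProduct_mulVec, ← mulVec_transpose, ← conjTranspose_eq_transpose_of_trivial, hA.eq,
      dotProduct_comm]
  have hparseval := hA.eigenvectorBasis.sum_inner_mul_inner v (WithLp.toLp 2 (A *ᵥ v))
  simp only [EuclideanSpace.inner_eq_star_dotProduct, star_trivial] at hparseval
  rw [dotProduct_comm, ← hparseval]
  refine Finset.sum_congr rfl fun k _ => ?_
  rw [dotProduct_comm (A *ᵥ _), hsymm, hA.mulVec_eigenvectorBasis, dotProduct_smul,
    OrthonormalBasis.repr_apply_apply, EuclideanSpace.inner_eq_star_dotProduct, star_trivial,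
    smul_eq_mul, dotProduct_comm (hA.eigenvectorBasis k).ofLp]
  ring

theorem IsHermitian.sum_eigenvalues_sq_eq_sum_entries_sq (hA : A.IsHermitian) :
    ∑ k, hA.eigenvalues k ^ 2 = ∑ i, ∑ j, A i j ^ 2 := by
  have htrace : trace (A * A) = ∑ k, hA.eigenvalues k ^ 2 := by
    conv_lhs => rw [hA.spectral_theorem]
    rw [← map_mul, Unitary.conjStarAlgAut_apply, trace_mul_cycle, Unitary.coe_star_mul_self,
      one_mul, diagonal_mul_diagonal, trace_diagonal]
    simp [sq]
  rw [← htrace]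
  simp only [trace, diag, mul_apply]
  refine Finset.sum_congr rfl fun i _ => Finset.sum_congr rfl fun j _ => ?_
  rw [← hA.apply j i, star_trivial, sq]

end Matrix

theorem ENNReal.toReal_mul_le_toReal_and_toReal_le_toReal_mul {a b c s : ℝ≥0∞} {N : ℕ}
    (hs : s ≠ ∞) (hca : c ≤ N * a) (hab : a * s ≤ b) (hbc : b ≤ c * s) :
    a.toReal * s.toReal ≤ b.toReal ∧ b.toReal ≤ c.toReal * s.toReal := by
  rw [← ENNReal.toReal_mul, ← ENNReal.toReal_mul]
  by_cases hc : c = ∞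
  · have ha : a = ∞ := by
      subst hc
      exact (by simpa [ENNReal.mul_eq_top] using top_le_iff.mp hca : N ≠ 0 ∧ a = ∞).2
    subst hc ha
    rcases eq_or_ne s 0 with rfl | hs0
    · simp [show b = 0 by simpa using hbc]
    · have hb : b = ∞ := top_le_iff.mp (by simpa [ENNReal.top_mul hs0] using hab)
      simp [hb, ENNReal.top_mul hs0]
  · have hb : b ≠ ∞ := ne_top_of_le_ne_top (ENNReal.mul_ne_top hc hs) hbc
    exact ⟨ENNReal.toReal_mono hb hab, ENNReal.toReal_mono (ENNReal.mul_ne_top hc hs) hbc⟩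

theorem sq_sum_mul_le_sum_sq {n : Type*} [Fintype n] (l p : n → ℝ) (hp : ∀ k, 0 ≤ p k)
    (hp1 : ∑ k, p k ≤ 1) : (∑ k, l k * p k) ^ 2 ≤ ∑ k, l k ^ 2 :=
  calc (∑ k, l k * p k) ^ 2 ≤ (∑ k, l k ^ 2) * ∑ k, p k ^ 2 := Finset.sum_mul_sq_le_sq_mul_sq _ _ _
    _ ≤ (∑ k, l k ^ 2) * 1 := by
      gcongr
      calc ∑ k, p k ^ 2 ≤ (∑ k, p k) ^ 2 := Finset.sum_sq_le_sq_sum_of_nonneg fun k _ => hp k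
        _ ≤ 1 := pow_le_one₀ (Finset.sum_nonneg fun k _ => hp k) hp1
    _ = ∑ k, l k ^ 2 := mul_one _

theorem integral_mul_rescale_of_homogeneous {E : Type*} [NormedAddCommGroup E] [NormedSpace ℝ E]
    [MeasurableSpace E] [BorelSpace E] [FiniteDimensional ℝ E] (μ : Measure E)
    [μ.IsAddHaarMeasure] {f : E → ℝ} (hf : ∀ c : ℝ, c ≠ 0 → ∀ u, f (c • u) = f u) (w : E → ℝ)
    {U : ℝ} (hU : 0 < U) :
    ∫ u, f u * (U ^ (-(Module.finrank ℝ E : ℝ)) * w (U⁻¹ • u)) ∂μ = ∫ u, f u * w u ∂μ := by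
  have hUd : 0 < U ^ Module.finrank ℝ E := pow_pos hU _
  calc ∫ u, f u * (U ^ (-(Module.finrank ℝ E : ℝ)) * w (U⁻¹ • u)) ∂μ
      = U ^ (-(Module.finrank ℝ E : ℝ)) * ∫ u, f (U⁻¹ • u) * w (U⁻¹ • u) ∂μ := by
        rw [← integral_const_mul]
        refine integral_congr_ae (ae_of_all _ fun u => ?_)
        simp only [hf U⁻¹ (inv_ne_zero hU.ne')]
        ring
    _ = ∫ u, f u * w u ∂μ := by
        rw [Measure.integral_comp_inv_smul μ (fun u => f u * w u), abs_of_pos hUd, smul_eq_mul,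
          Real.rpow_neg hU.le, Real.rpow_natCast, inv_mul_cancel_left₀ hUd.ne']

namespace EuclideanSpace

variable {n : Type*} [Fintype n]

theorem dotProduct_mulVec_div_norm_sq_smul (A : Matrix n n ℝ) {c : ℝ} (hc : c ≠ 0)
    (u : EuclideanSpace ℝ n) :
    (c • u : EuclideanSpace ℝ n) ⬝ᵥ A *ᵥ (c • u : EuclideanSpace ℝ n) / ‖c • u‖ ^ 2 =
      u ⬝ᵥ A *ᵥ u / ‖u‖ ^ 2 := by
  rw [norm_smul, mul_pow, Real.norm_eq_abs, sq_abs, WithLp.ofLp_smul, mulVec_smul, smul_dotProduct,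
    dotProduct_smul, smul_eq_mul, smul_eq_mul, ← mul_assoc, ← sq,
    mul_div_mul_left _ _ (pow_ne_zero 2 hc)]

theorem sum_sq_div_norm_sq_eq_one {u : EuclideanSpace ℝ n} (hu : u ≠ 0) :
    ∑ k, u k ^ 2 / ‖u‖ ^ 2 = 1 := by
  rw [← Finset.sum_div, div_eq_one_iff_eq (by positivity), EuclideanSpace.norm_sq_eq]
  simp [sq_abs]

theorem sum_sq_div_norm_sq_le_one (u : EuclideanSpace ℝ n) : ∑ k, u k ^ 2 / ‖u‖ ^ 2 ≤ 1 := by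
  rcases eq_or_ne u 0 with rfl | hu
  · simp
  · exact (sum_sq_div_norm_sq_eq_one hu).le

theorem one_le_card_mul_sum_sq_div_norm_sq_sq {u : EuclideanSpace ℝ n} (hu : u ≠ 0) :
    1 ≤ Fintype.card n * ∑ k, (u k ^ 2 / ‖u‖ ^ 2) ^ 2 := by
  have h := sq_sum_le_card_mul_sum_sq (s := Finset.univ) (f := fun k => u k ^ 2 / ‖u‖ ^ 2)
  rwa [sum_sq_div_norm_sq_eq_one hu, one_pow] at h

end EuclideanSpace

theorem Matrix.IsHermitian.integral_rayleigh_sq_mul_eq {n : Type*} [Fintype n] [DecidableEq n]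
    {A : Matrix n n ℝ} (hA : A.IsHermitian) {w : EuclideanSpace ℝ n → ℝ}
    (hw : ∀ u v : EuclideanSpace ℝ n, ‖u‖ = ‖v‖ → w u = w v) :
    ∫ v : EuclideanSpace ℝ n, (v ⬝ᵥ A *ᵥ v / ‖v‖ ^ 2) ^ 2 * w v =
      ∫ u, (∑ k, hA.eigenvalues k * (u k ^ 2 / ‖u‖ ^ 2)) ^ 2 * w u := by
  let e := hA.eigenvectorBasis.repr
  conv_rhs => rw [← e.measurePreserving.integral_comp e.toHomeomorph.measurableEmbedding]
  refine integral_congr_ae (ae_of_all _ fun v => ?_)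
  simp only [e, hA.dotProduct_mulVec_eq_sum_eigenvalues, LinearIsometryEquiv.norm_map,
    Finset.sum_div, mul_div_assoc,
    hw (hA.eigenvectorBasis.repr v) v (LinearIsometryEquiv.norm_map _ v)]

section RadialWeight

variable {n : Type*} [Fintype n] {w : EuclideanSpace ℝ n → ℝ}

theorem lintegral_coord_sq_div_norm_sq_sq_mul_eq [DecidableEq n]
    (hw_radial : ∀ u v : EuclideanSpace ℝ n, ‖u‖ = ‖v‖ → w u = w v) (i j : n) :
    ∫⁻ u, ENNReal.ofReal ((u i ^ 2 / ‖u‖ ^ 2) ^ 2 * w u) =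
      ∫⁻ u, ENNReal.ofReal ((u j ^ 2 / ‖u‖ ^ 2) ^ 2 * w u) := by
  let e := LinearIsometryEquiv.piLpCongrLeft 2 ℝ ℝ (Equiv.swap i j)
  rw [← e.measurePreserving.lintegral_comp_emb e.toHomeomorph.measurableEmbedding]
  refine lintegral_congr fun u => ?_
  have he : (e u) i = u j := by simp [e, LinearIsometryEquiv.piLpCongrLeft_apply]
  rw [he, e.norm_map, hw_radial (e u) u (e.norm_map u)]

theorem lintegral_le_card_sq_mul_lintegral_coord_sq_div_norm_sq_sq (hw_meas : Measurable w)
    (hw_nonneg : ∀ u, 0 ≤ w u) (hw_radial : ∀ u v : EuclideanSpace ℝ n, ‖u‖ = ‖v‖ → w u = w v)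
    (i : n) :
    ∫⁻ u, ENNReal.ofReal (w u) ≤
      (Fintype.card n ^ 2 : ℕ) * ∫⁻ u, ENNReal.ofReal ((u i ^ 2 / ‖u‖ ^ 2) ^ 2 * w u) := by
  classical
  have : Nonempty n := ⟨i⟩
  have hmeas : ∀ k, Measurable fun u => ENNReal.ofReal ((u k ^ 2 / ‖u‖ ^ 2) ^ 2 * w u) :=
    fun k => by fun_prop
  calc ∫⁻ u, ENNReal.ofReal (w u)
      ≤ ∫⁻ u, (Fintype.card n : ℝ≥0∞) *
          ∑ k, ENNReal.ofReal ((u k ^ 2 / ‖u‖ ^ 2) ^ 2 * w u) := by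
        refine lintegral_mono_ae ?_
        filter_upwards [Measure.ae_ne volume 0] with u hu
        rw [← ENNReal.ofReal_sum_of_nonneg fun k _ => mul_nonneg (sq_nonneg _) (hw_nonneg u),
          ← ENNReal.ofReal_natCast, ← ENNReal.ofReal_mul (by positivity), ← Finset.sum_mul,
          ← mul_assoc]
        exact ENNReal.ofReal_le_ofReal (le_mul_of_one_le_left (hw_nonneg u)
          (EuclideanSpace.one_le_card_mul_sum_sq_div_norm_sq_sq hu))
    _ = (Fintype.card n ^ 2 : ℕ) * ∫⁻ u, ENNReal.ofReal ((u i ^ 2 / ‖u‖ ^ 2) ^ 2 * w u) := by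
        rw [lintegral_const_mul _ (Finset.measurable_sum _ fun k _ => hmeas k),
          lintegral_finsetSum _ fun k _ => hmeas k]
        simp only [lintegral_coord_sq_div_norm_sq_sq_mul_eq hw_radial _ i, Finset.sum_const,
          Finset.card_univ, nsmul_eq_mul]
        push_cast
        ring

theorem lintegral_coord_sq_div_norm_sq_sq_mul_le (hw_meas : Measurable w)
    (hw_nonneg : ∀ u, 0 ≤ w u) (hw_radial : ∀ u v : EuclideanSpace ℝ n, ‖u‖ = ‖v‖ → w u = w v)
    (l : n → ℝ) (hl : ∀ k, 0 ≤ l k) (i : n) :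
    (∫⁻ u, ENNReal.ofReal ((u i ^ 2 / ‖u‖ ^ 2) ^ 2 * w u)) * ENNReal.ofReal (∑ k, l k ^ 2) ≤
      ∫⁻ u, ENNReal.ofReal ((∑ k, l k * (u k ^ 2 / ‖u‖ ^ 2)) ^ 2 * w u) := by
  classical
  calc (∫⁻ u, ENNReal.ofReal ((u i ^ 2 / ‖u‖ ^ 2) ^ 2 * w u)) * ENNReal.ofReal (∑ k, l k ^ 2)
      = ∑ k, ∫⁻ u, ENNReal.ofReal ((l k * (u k ^ 2 / ‖u‖ ^ 2)) ^ 2 * w u) := by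
        rw [ENNReal.ofReal_sum_of_nonneg fun k _ => sq_nonneg _, Finset.mul_sum]
        refine Finset.sum_congr rfl fun k _ => ?_
        rw [← lintegral_coord_sq_div_norm_sq_sq_mul_eq hw_radial k i, mul_comm,
          ← lintegral_const_mul _ (by fun_prop)]
        refine lintegral_congr fun u => ?_
        rw [← ENNReal.ofReal_mul (sq_nonneg _), mul_pow, mul_assoc]
    _ = ∫⁻ u, ENNReal.ofReal (∑ k, (l k * (u k ^ 2 / ‖u‖ ^ 2)) ^ 2 * w u) := by
        rw [← lintegral_finsetSum _ fun k _ => by fun_prop]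
        refine lintegral_congr fun u => ?_
        rw [ENNReal.ofReal_sum_of_nonneg fun k _ => mul_nonneg (sq_nonneg _) (hw_nonneg u)]
    _ ≤ ∫⁻ u, ENNReal.ofReal ((∑ k, l k * (u k ^ 2 / ‖u‖ ^ 2)) ^ 2 * w u) := by
        refine lintegral_mono fun u => ENNReal.ofReal_le_ofReal ?_
        rw [← Finset.sum_mul]
        exact mul_le_mul_of_nonneg_right (Finset.sum_sq_le_sq_sum_of_nonneg fun k _ =>
          mul_nonneg (hl k) (by positivity)) (hw_nonneg u)

theorem lintegral_sum_mul_sq_div_norm_sq_sq_mul_le (hw_nonneg : ∀ u, 0 ≤ w u) (l : n → ℝ) :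
    ∫⁻ u, ENNReal.ofReal ((∑ k, l k * (u k ^ 2 / ‖u‖ ^ 2)) ^ 2 * w u) ≤
      (∫⁻ u, ENNReal.ofReal (w u)) * ENNReal.ofReal (∑ k, l k ^ 2) := by
  rw [← lintegral_mul_const' _ _ ENNReal.ofReal_ne_top]
  refine lintegral_mono fun u => ?_
  rw [← ENNReal.ofReal_mul (hw_nonneg u), mul_comm (w u)]
  exact ENNReal.ofReal_le_ofReal (mul_le_mul_of_nonneg_right
    (sq_sum_mul_le_sum_sq l _ (fun k => by positivity)
      (EuclideanSpace.sum_sq_div_norm_sq_le_one u)) (hw_nonneg u))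

theorem diagonal_rayleigh_sq_integral_bounds (hw_meas : Measurable w)
    (hw_nonneg : ∀ u, 0 ≤ w u) (hw_radial : ∀ u v : EuclideanSpace ℝ n, ‖u‖ = ‖v‖ → w u = w v)
    (l : n → ℝ) (hl : ∀ k, 0 ≤ l k) (i : n) :
    (∫ u, (u i ^ 2 / ‖u‖ ^ 2) ^ 2 * w u) * ∑ k, l k ^ 2 ≤
        ∫ u, (∑ k, l k * (u k ^ 2 / ‖u‖ ^ 2)) ^ 2 * w u ∧
      ∫ u, (∑ k, l k * (u k ^ 2 / ‖u‖ ^ 2)) ^ 2 * w u ≤ (∫ u, w u) * ∑ k, l k ^ 2 := by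
  have hreal := ENNReal.toReal_mul_le_toReal_and_toReal_le_toReal_mul ENNReal.ofReal_ne_top
    (lintegral_le_card_sq_mul_lintegral_coord_sq_div_norm_sq_sq hw_meas hw_nonneg hw_radial i)
    (lintegral_coord_sq_div_norm_sq_sq_mul_le hw_meas hw_nonneg hw_radial l hl i)
    (lintegral_sum_mul_sq_div_norm_sq_sq_mul_le hw_nonneg l)
  rw [ENNReal.toReal_ofReal (by positivity)] at hreal
  have hint : ∀ f : EuclideanSpace ℝ n → ℝ, Measurable f → (∀ u, 0 ≤ f u) →
      ∫ u, f u = (∫⁻ u, ENNReal.ofReal (f u)).toReal := fun f hf hf0 =>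
    integral_eq_lintegral_of_nonneg_ae (ae_of_all _ hf0) hf.aestronglyMeasurable
  rwa [hint _ (by fun_prop) fun u => mul_nonneg (by positivity) (hw_nonneg u),
    hint _ (by fun_prop) fun u => mul_nonneg (by positivity) (hw_nonneg u),
    hint _ hw_meas hw_nonneg]

end RadialWeight

theorem weighted_norm_isometry_general {d : ℕ} (hd : 0 < d)
    (w : EuclideanSpace ℝ (Fin d) → ℝ)
    (hw_meas : Measurable w)
    (hw_nonneg : ∀ u, 0 ≤ w u)
    (hw_radial : ∀ u v : EuclideanSpace ℝ (Fin d), ‖u‖ = ‖v‖ → w u = w v)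
    (U : ℝ) (hU : 1 < U)
    (A : Matrix (Fin d) (Fin d) ℝ) (hA : A.PosSemidef) :
    (∫ v, (v ⟨0, hd⟩) ^ 4 / ‖v‖ ^ 4 * w v) * (∑ i, ∑ j, (A i j) ^ 2) ≤
        (∫ u, (Matrix.trace ((Matrix.of fun i j => u i * u j / ‖u‖ ^ 2)ᵀ * A)) ^ 2 *
          (U ^ (-(d : ℝ)) * w ((U⁻¹ : ℝ) • u))) ∧
      (∫ u, (Matrix.trace ((Matrix.of fun i j => u i * u j / ‖u‖ ^ 2)ᵀ * A)) ^ 2 *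
          (U ^ (-(d : ℝ)) * w ((U⁻¹ : ℝ) • u))) ≤
        2 * (∫ v, w v) * (∑ i, ∑ j, (A i j) ^ 2) := by
  have hrescale := integral_mul_rescale_of_homogeneous volume
    (f := fun v : EuclideanSpace ℝ (Fin d) => (v ⬝ᵥ A *ᵥ v / ‖v‖ ^ 2) ^ 2)
    (fun c hc u => congrArg (· ^ 2) (EuclideanSpace.dotProduct_mulVec_div_norm_sq_smul A hc u))
    w (zero_lt_one.trans hU)
  rw [finrank_euclideanSpace_fin] at hrescale
  simp only [trace_transpose_of_mul_div_mul, hrescale, hA.1.integral_rayleigh_sq_mul_eq hw_radial,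
    ← hA.1.sum_eigenvalues_sq_eq_sum_entries_sq]
  obtain ⟨hlow, hup⟩ := diagonal_rayleigh_sq_integral_bounds hw_meas hw_nonneg hw_radial
    hA.1.eigenvalues hA.eigenvalues_nonneg ⟨0, hd⟩
  simp only [div_pow, ← pow_mul, Nat.reduceMul] at hlow
  exact ⟨hlow, hup.trans (mul_le_mul_of_nonneg_right
    (le_mul_of_one_le_left (integral_nonneg hw_nonneg) one_le_two) (by positivity))⟩

/-- The norm equivalence for the weighted norm `‖A‖_w² = ∫ ⟨Θ(u),A⟩² w_U(u) du`,
`Θ(u) = uuᵀ/|u|²`, with constants independent of `U`: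
`κ₁ ‖A‖₂² ≤ ‖A‖_w² ≤ 2 ‖w‖_{L¹} ‖A‖₂²` for positive semi-definite `A`. -/
theorem weighted_norm_isometry {d : ℕ} (hd : 0 < d)
    (w : EuclideanSpace ℝ (Fin d) → ℝ)
    (hw_meas : Measurable w)
    (hw_nonneg : ∀ u, 0 ≤ w u)
    (hw_radial : ∀ u v : EuclideanSpace ℝ (Fin d), ‖u‖ = ‖v‖ → w u = w v)
    (hw_supp : ∀ u, w u ≠ 0 → 1 / 4 < ‖u‖ ∧ ‖u‖ ≤ 1 / 2)
    (U : ℝ) (hU : 1 < U)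
    (A : Matrix (Fin d) (Fin d) ℝ) (hA : A.PosSemidef) :
    (∫ v, (v ⟨0, hd⟩) ^ 4 / ‖v‖ ^ 4 * w v) * (∑ i, ∑ j, (A i j) ^ 2) ≤
        (∫ u, (Matrix.trace ((Matrix.of fun i j => u i * u j / ‖u‖ ^ 2)ᵀ * A)) ^ 2 *
          (U ^ (-(d : ℝ)) * w ((U⁻¹ : ℝ) • u))) ∧
      (∫ u, (Matrix.trace ((Matrix.of fun i j => u i * u j / ‖u‖ ^ 2)ᵀ * A)) ^ 2 *
          (U ^ (-(d : ℝ)) * w ((U⁻¹ : ℝ) • u))) ≤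
        2 * (∫ v, w v) * (∑ i, ∑ j, (A i j) ^ 2) :=
  weighted_norm_isometry_general hd w hw_meas hw_nonneg hw_radial U hU A hA
end

section
/- Let M ∈ R^{d×d} have rank r with singular value decomposition M = Σ_{j=1}^r σ_j u_j v_j^T, and let S_1 = span(u_1,...,u_r), S_2 = span(v_1,...,v_r) with orthogonal projections Π_{S_1}, Π_{S_2} and Π_{S_1^⊥}, Π_{S_2^⊥}. Define π_M(A) = A − Π_{S_1^⊥} A Π_{S_2^⊥}. Then for any A ∈ R^{d×d}: (a) π_M(A) = Π_{S_1^⊥} A Π_{S_2} + Π_{S_1} A; (b) rank(π_M(A)) ≤ 2r; (c) ||π_M(A)||_1 ≤ √(2r) ||A||_2. -/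
/-! Part (a) is ring arithmetic, and its two summands factor through `P₂` and `P₁`, each of rank
at most `r`, which gives (b). For (c), `A - π_M(A) = QAQ'` with `Q = 1 - P₁`, `Q' = 1 - P₂`
orthogonal projections, so `π_M(A)` is orthogonal to `QAQ'` in the trace inner product and
`‖π_M(A)‖₂ ≤ ‖A‖₂`; finally Cauchy–Schwarz over the nonzero singular values gives
`‖B‖₁ ≤ √(rank B) ‖B‖₂`. -/

open Matrix BigOperators

/-- Singular values of a real square matrix: square roots of the eigenvalues of `Aᵀ * A`. -/
noncomputable def singularValues {d : ℕ} (A : Matrix (Fin d) (Fin d) ℝ) : Fin d → ℝ :=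
  fun i => Real.sqrt ((Matrix.isHermitian_conjTranspose_mul_self A).eigenvalues i)

/-- Nuclear norm: sum of singular values. -/
noncomputable def nuclearNorm {d : ℕ} (A : Matrix (Fin d) (Fin d) ℝ) : ℝ :=
  ∑ i, singularValues A i

/-- Frobenius norm. -/
noncomputable def frobeniusNorm {d : ℕ} (A : Matrix (Fin d) (Fin d) ℝ) : ℝ :=
  Real.sqrt (∑ i, ∑ j, (A i j) ^ 2)

/-- Cauchy–Schwarz against the indicator of the support of `f`. -/
theorem Real.sum_sqrt_le_sqrt_card_mul_sqrt_sum {ι : Type*} [Fintype ι] (f : ι → ℝ)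
    (hf : ∀ i, 0 ≤ f i) :
    ∑ i, √(f i) ≤ √(Fintype.card {i // f i ≠ 0}) * √(∑ i, f i) := by
  classical
  set s := Finset.univ.filter (fun i => f i ≠ 0)
  calc ∑ i, √(f i) = ∑ i ∈ s, √1 * √(f i) := by
        simp only [Real.sqrt_one, one_mul]
        rw [Finset.sum_filter_of_ne]
        intro i _ hi h0
        simp [h0] at hi
    _ ≤ √(∑ _i ∈ s, 1) * √(∑ i ∈ s, f i) :=
        Real.sum_sqrt_mul_sqrt_le s (fun _ => zero_le_one) hf
    _ = √(Fintype.card {i // f i ≠ 0}) * √(∑ i, f i) := by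
        rw [Finset.sum_filter_ne_zero, Finset.sum_const, nsmul_one, Fintype.card_subtype]

namespace Matrix

section Rank

variable {K : Type*} [Field K] {m n : Type*} [Fintype n]

theorem rank_add_le (A B : Matrix m n K) : (A + B).rank ≤ A.rank + B.rank := by
  have hrange : LinearMap.range (A + B).mulVecLin ≤
      LinearMap.range A.mulVecLin ⊔ LinearMap.range B.mulVecLin := by
    rintro _ ⟨x, rfl⟩
    exact Submodule.mem_sup.2
      ⟨A *ᵥ x, ⟨x, rfl⟩, B *ᵥ x, ⟨x, rfl⟩, (add_mulVec A B x).symm⟩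
  exact (Submodule.finrank_mono hrange).trans
    (Submodule.finrank_add_le_finrank_add_finrank _ _)

theorem rank_sum_le {ι : Type*} (s : Finset ι) (A : ι → Matrix m n K) :
    (∑ i ∈ s, A i).rank ≤ ∑ i ∈ s, (A i).rank :=
  Finset.le_sum_of_subadditive (fun A : Matrix m n K => A.rank) rank_zero.le rank_add_le s A

theorem rank_sum_vecMulVec_le {ι : Type*} [Fintype ι] (u : ι → m → K) (v : ι → n → K) :
    (∑ i, vecMulVec (u i) (v i)).rank ≤ Fintype.card ι := by
  calc (∑ i, vecMulVec (u i) (v i)).rank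
      ≤ ∑ i, (vecMulVec (u i) (v i)).rank := rank_sum_le _ _
    _ ≤ ∑ _i : ι, 1 := Finset.sum_le_sum fun i _ => rank_vecMulVec_le _ _
    _ = Fintype.card ι := by simp

end Rank

section Projection

variable {R : Type*} [CommSemiring R] {n ι : Type*} [Fintype ι]

theorem transpose_sum_vecMulVec_self (u : ι → n → R) :
    (∑ i, vecMulVec (u i) (u i))ᵀ = ∑ i, vecMulVec (u i) (u i) := by
  simp [transpose_sum]

theorem isIdempotentElem_sum_vecMulVec_self [Fintype n] [DecidableEq ι] (u : ι → n → R)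
    (hu : ∀ i j, u i ⬝ᵥ u j = if i = j then 1 else 0) :
    IsIdempotentElem (∑ i, vecMulVec (u i) (u i)) := by
  simp [IsIdempotentElem, Finset.sum_mul_sum, vecMulVec_mul_vecMulVec, hu, ite_smul,
    apply_ite (vecMulVec _)]

end Projection

section Frobenius

variable {m n : Type*} [Fintype m] [Fintype n]

theorem trace_transpose_mul_self_eq_sum_sq (A : Matrix m n ℝ) :
    (Aᵀ * A).trace = ∑ i, ∑ j, A i j ^ 2 := by
  simp only [trace, diag, mul_apply, transpose_apply, sq]
  exact Finset.sum_comm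

theorem trace_transpose_mul_self_sub_le {Q : Matrix m m ℝ} {Q' : Matrix n n ℝ}
    (hQ : Qᵀ = Q) (hQQ : IsIdempotentElem Q) (hQ' : Q'ᵀ = Q') (hQQ' : IsIdempotentElem Q')
    (A : Matrix m n ℝ) :
    ((A - Q * A * Q')ᵀ * (A - Q * A * Q')).trace ≤ (Aᵀ * A).trace := by
  set C := Q * A * Q'
  have hCt : Cᵀ = Q' * Aᵀ * Q := by simp only [C, transpose_mul, hQ, hQ', Matrix.mul_assoc]
  have hCC : (Cᵀ * C).trace = (Cᵀ * A).trace :=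
    calc (Cᵀ * C).trace = (Q' * Aᵀ * (Q * Q) * A * Q').trace := by
          rw [hCt]; simp only [C, Matrix.mul_assoc]
      _ = (Q' * (Q' * Aᵀ * Q * A)).trace := by rw [hQQ.eq, trace_mul_comm]
      _ = (Cᵀ * A).trace := by simp only [← Matrix.mul_assoc, hQQ'.eq, hCt]
  have hAC : (Aᵀ * C).trace = (Cᵀ * A).trace := by
    rw [← trace_transpose, transpose_mul, transpose_transpose]
  have hC_nonneg : 0 ≤ (Cᵀ * C).trace := by
    rw [trace_transpose_mul_self_eq_sum_sq]; positivity
  rw [transpose_sub, Matrix.sub_mul, Matrix.mul_sub, Matrix.mul_sub, trace_sub, trace_sub,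
    trace_sub]
  linarith

end Frobenius

end Matrix

theorem frobeniusNorm_eq_sqrt_trace {d : ℕ} (A : Matrix (Fin d) (Fin d) ℝ) :
    frobeniusNorm A = √(Aᵀ * A).trace := by
  rw [frobeniusNorm, trace_transpose_mul_self_eq_sum_sq]

theorem frobeniusNorm_sub_mul_mul_le {d : ℕ} {Q Q' : Matrix (Fin d) (Fin d) ℝ}
    (hQ : Qᵀ = Q) (hQQ : IsIdempotentElem Q) (hQ' : Q'ᵀ = Q') (hQQ' : IsIdempotentElem Q')
    (A : Matrix (Fin d) (Fin d) ℝ) :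
    frobeniusNorm (A - Q * A * Q') ≤ frobeniusNorm A := by
  simp only [frobeniusNorm_eq_sqrt_trace]
  exact Real.sqrt_le_sqrt (trace_transpose_mul_self_sub_le hQ hQQ hQ' hQQ' A)

theorem frobeniusNorm_eq_sqrt_sum_eigenvalues {d : ℕ} (B : Matrix (Fin d) (Fin d) ℝ) :
    frobeniusNorm B = √(∑ i, (isHermitian_conjTranspose_mul_self B).eigenvalues i) := by
  rw [frobeniusNorm_eq_sqrt_trace, ← conjTranspose_eq_transpose_of_trivial,
    (isHermitian_conjTranspose_mul_self B).trace_eq_sum_eigenvalues]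
  simp

theorem nuclearNorm_le_sqrt_rank_mul_frobeniusNorm {d : ℕ} (B : Matrix (Fin d) (Fin d) ℝ) :
    nuclearNorm B ≤ √B.rank * frobeniusNorm B := by
  have hH := isHermitian_conjTranspose_mul_self B
  have hrank : B.rank = Fintype.card {i // hH.eigenvalues i ≠ 0} := by
    rw [← hH.rank_eq_card_non_zero_eigs, rank_conjTranspose_mul_self]
  rw [hrank, frobeniusNorm_eq_sqrt_sum_eigenvalues]
  exact Real.sum_sqrt_le_sqrt_card_mul_sqrt_sum _ (eigenvalues_conjTranspose_mul_self_nonneg B)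

theorem pi_M_properties_general {d r : ℕ}
    (u v : Fin r → Fin d → ℝ)
    (hu : ∀ i j, ∑ a, u i a * u j a = if i = j then (1 : ℝ) else 0)
    (hv : ∀ i j, ∑ a, v i a * v j a = if i = j then (1 : ℝ) else 0)
    (P₁ P₂ : Matrix (Fin d) (Fin d) ℝ)
    (hP₁ : P₁ = ∑ j, Matrix.vecMulVec (u j) (u j))
    (hP₂ : P₂ = ∑ j, Matrix.vecMulVec (v j) (v j))
    (A : Matrix (Fin d) (Fin d) ℝ) :
    A - (1 - P₁) * A * (1 - P₂) = (1 - P₁) * A * P₂ + P₁ * A ∧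
    (A - (1 - P₁) * A * (1 - P₂)).rank ≤ 2 * r ∧
    nuclearNorm (A - (1 - P₁) * A * (1 - P₂)) ≤ Real.sqrt (2 * r) * frobeniusNorm A := by
  have hdecomp : A - (1 - P₁) * A * (1 - P₂) = (1 - P₁) * A * P₂ + P₁ * A := by
    noncomm_ring
  set B := A - (1 - P₁) * A * (1 - P₂)
  have hrank : B.rank ≤ 2 * r := by
    have hP₁r : P₁.rank ≤ r := by simpa [hP₁] using rank_sum_vecMulVec_le u u
    have hP₂r : P₂.rank ≤ r := by simpa [hP₂] using rank_sum_vecMulVec_le v v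
    calc B.rank ≤ ((1 - P₁) * A * P₂).rank + (P₁ * A).rank := hdecomp ▸ rank_add_le _ _
      _ ≤ P₂.rank + P₁.rank := add_le_add (rank_mul_le_right _ _) (rank_mul_le_left _ _)
      _ ≤ 2 * r := by omega
  have hQ₁ : (1 - P₁)ᵀ = 1 - P₁ := by
    rw [transpose_sub, transpose_one, hP₁, transpose_sum_vecMulVec_self]
  have hQ₂ : (1 - P₂)ᵀ = 1 - P₂ := by
    rw [transpose_sub, transpose_one, hP₂, transpose_sum_vecMulVec_self]
  have hQQ₁ : IsIdempotentElem (1 - P₁) :=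
    (hP₁ ▸ isIdempotentElem_sum_vecMulVec_self u hu).one_sub
  have hQQ₂ : IsIdempotentElem (1 - P₂) :=
    (hP₂ ▸ isIdempotentElem_sum_vecMulVec_self v hv).one_sub
  refine ⟨hdecomp, hrank, ?_⟩
  calc nuclearNorm B
      ≤ √B.rank * frobeniusNorm B := nuclearNorm_le_sqrt_rank_mul_frobeniusNorm B
    _ ≤ √(2 * r) * frobeniusNorm A :=
        mul_le_mul (Real.sqrt_le_sqrt (mod_cast hrank))
          (frobeniusNorm_sub_mul_mul_le hQ₁ hQQ₁ hQ₂ hQQ₂ A) (Real.sqrt_nonneg _)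
          (Real.sqrt_nonneg _)

/-- Let `M = ∑_{j<r} σ_j u_j v_jᵀ` be a singular value decomposition with orthonormal
families `u`, `v`, let `P₁, P₂` be the orthogonal projections onto `span(u)` and
`span(v)`, and define `π_M(A) = A − (1−P₁) A (1−P₂)`.  Then
(a) `π_M(A) = (1−P₁) A P₂ + P₁ A`, (b) `rank(π_M(A)) ≤ 2r`, and
(c) `‖π_M(A)‖₁ ≤ √(2r) ‖A‖₂`. -/
theorem pi_M_properties {d r : ℕ}
    (σ : Fin r → ℝ) (u v : Fin r → Fin d → ℝ)
    (hu : ∀ i j, ∑ a, u i a * u j a = if i = j then (1 : ℝ) else 0)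
    (hv : ∀ i j, ∑ a, v i a * v j a = if i = j then (1 : ℝ) else 0)
    (M : Matrix (Fin d) (Fin d) ℝ)
    (hM : M = ∑ j, σ j • Matrix.vecMulVec (u j) (v j))
    (P₁ P₂ : Matrix (Fin d) (Fin d) ℝ)
    (hP₁ : P₁ = ∑ j, Matrix.vecMulVec (u j) (u j))
    (hP₂ : P₂ = ∑ j, Matrix.vecMulVec (v j) (v j))
    (A : Matrix (Fin d) (Fin d) ℝ) :
    A - (1 - P₁) * A * (1 - P₂) = (1 - P₁) * A * P₂ + P₁ * A ∧
    (A - (1 - P₁) * A * (1 - P₂)).rank ≤ 2 * r ∧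
    nuclearNorm (A - (1 - P₁) * A * (1 - P₂)) ≤ Real.sqrt (2 * r) * frobeniusNorm A :=
  pi_M_properties_general u v hu hv P₁ P₂ hP₁ hP₂ A
end
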